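/- Let 𝒜 ∈ ℝ^{n×n}, 𝒩_1,…,𝒩_m ∈ ℝ^{n×n} and 𝒞 ∈ ℝ^{p×n} be partitioned into blocks 𝒜 = [𝒜₁₁ 𝒜₁₂; 𝒜₂₁ 𝒜₂₂], 𝒩_k = [𝒩_{k,11} 𝒩_{k,12}; 𝒩_{k,21} 𝒩_{k,22}], 𝒞 = [𝒞₁ 𝒞₂] with 𝒜₁₁, 𝒩_{k,11} ∈ ℝ^{r×r}, let Θ = diag(Θ₁, Θ₂) be block-diagonal with symmetric positive semidefinite blocks, γ > 0, and suppose 𝒜 and 𝒜₂₂ are invertible and 𝒜^⊤ Θ + Θ 𝒜 + γ^{-2} Σ_{k=1}^m 𝒩_k^⊤ Θ 𝒩_k = −𝒞^⊤ 𝒞. Define Ā = 𝒜₁₁ − 𝒜₁₂ 𝒜₂₂^{-1} 𝒜₂₁, C̄ = 𝒞₁ − 𝒞₂ 𝒜₂₂^{-1} 𝒜₂₁, N̄_k = 𝒩_{k,11} − 𝒩_{k,12} 𝒜₂₂^{-1} 𝒜₂₁ and N̄_{k,21} = 𝒩_{k,21} − 𝒩_{k,22} 𝒜₂₂^{-1}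 𝒜₂₁. Then Ā^⊤ Θ₁ + Θ₁ Ā + γ^{-2} Σ_{k=1}^m N̄_k^⊤ Θ₁ N̄_k = −C̄^⊤ C̄ − γ^{-2} Σ_{k=1}^m N̄_{k,21}^⊤ Θ₂ N̄_{k,21}, and in particular Ā^⊤ Θ₁ + Θ₁ Ā + γ^{-2} Σ_{k=1}^m N̄_k^⊤ Θ₁ N̄_k ≤ −C̄^⊤ C̄ in the positive semidefinite order. -/

import Mathlib

/-!
Conjugate the full equation by `T = [1; -A₂₂⁻¹ A₂₁]`, i.e. multiply by `Tᵀ` on the left and `T`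
on the right. Since `𝒜 T = [Ā; 0]`, `𝒩ₖ T = [N̄ₖ; N̄ₖ,₂₁]` and `𝒞 T = C̄`, and `Θ` is block
diagonal, the conjugated equation is exactly the reduced one, with the extra term
`γ⁻² ∑ₖ N̄ₖ,₂₁ᵀ Θ₂ N̄ₖ,₂₁` coming from the second block row of `𝒩ₖ T`. That term is positive
semidefinite because `Θ₂` is, which gives the inequality.
-/

open Matrix

section BlockReduction

variable {R : Type*} [CommRing R] {l m n o : Type*} [Fintype m] [Fintype n]

lemma fromBlocks_mul_fromRows_one_neg [DecidableEq m] (A : Matrix l m R) (B : Matrix l n R)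
    (C : Matrix o m R) (D : Matrix o n R) (E : Matrix n m R) :
    fromBlocks A B C D * fromRows (1 : Matrix m m R) (-E) = fromRows (A - B * E) (C - D * E) := by
  rw [fromBlocks_mul_fromRows]
  simp [sub_eq_add_neg]

lemma fromCols_mul_fromRows_one_neg [DecidableEq m] (C₁ : Matrix l m R) (C₂ : Matrix l n R)
    (E : Matrix n m R) :
    fromCols C₁ C₂ * fromRows (1 : Matrix m m R) (-E) = C₁ - C₂ * E := by
  rw [fromCols_mul_fromRows]
  simp [sub_eq_add_neg]

lemma transpose_fromRows_mul_fromBlocks_zero_mul_fromRows (X₁ : Matrix m l R)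
    (X₂ : Matrix n l R) (Θ₁ : Matrix m m R) (Θ₂ : Matrix n n R) (Y₁ : Matrix m o R)
    (Y₂ : Matrix n o R) :
    (fromRows X₁ X₂)ᵀ * fromBlocks Θ₁ 0 0 Θ₂ * fromRows Y₁ Y₂
      = X₁ᵀ * Θ₁ * Y₁ + X₂ᵀ * Θ₂ * Y₂ := by
  rw [transpose_fromRows, fromCols_mul_fromBlocks, fromCols_mul_fromRows]
  simp

end BlockReduction

section Congruence

variable {R : Type*} [CommRing R] {l m n ι : Type*} [Fintype l] [Fintype n] [Fintype ι]

lemma generalizedLyapunov_congr {A Θ : Matrix n n R} {N : ι → Matrix n n R}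
    {C : Matrix l n R} {c : R}
    (h : Aᵀ * Θ + Θ * A + c • ∑ k, (N k)ᵀ * Θ * N k = -(Cᵀ * C)) (T : Matrix n m R) :
    (A * T)ᵀ * Θ * T + Tᵀ * Θ * (A * T) + c • ∑ k, (N k * T)ᵀ * Θ * (N k * T)
      = -((C * T)ᵀ * (C * T)) := by
  have := congrArg (Tᵀ * · * T) h
  simpa only [transpose_mul, Matrix.mul_add, Matrix.add_mul, Matrix.mul_smul, Matrix.smul_mul,
    Matrix.mul_sum, Matrix.sum_mul, Matrix.mul_neg, Matrix.neg_mul, Matrix.mul_assoc] using this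

end Congruence

section Reduction

variable {R : Type*} [CommRing R] {l m n ι : Type*} [Fintype l] [Fintype m] [Fintype n]
  [Fintype ι] [DecidableEq m]

theorem reduced_generalizedLyapunov_eq (A₁₁ : Matrix m m R) (A₁₂ : Matrix m n R)
    (A₂₁ : Matrix n m R) (A₂₂ : Matrix n n R) (N₁₁ : ι → Matrix m m R) (N₁₂ : ι → Matrix m n R)
    (N₂₁ : ι → Matrix n m R) (N₂₂ : ι → Matrix n n R) (C₁ : Matrix l m R) (C₂ : Matrix l n R)
    (Θ₁ : Matrix m m R) (Θ₂ : Matrix n n R) (c : R) {E : Matrix n m R} (hE : A₂₂ * E = A₂₁)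
    (h : (fromBlocks A₁₁ A₁₂ A₂₁ A₂₂)ᵀ * fromBlocks Θ₁ 0 0 Θ₂
        + fromBlocks Θ₁ 0 0 Θ₂ * fromBlocks A₁₁ A₁₂ A₂₁ A₂₂
        + c • ∑ k, (fromBlocks (N₁₁ k) (N₁₂ k) (N₂₁ k) (N₂₂ k))ᵀ * fromBlocks Θ₁ 0 0 Θ₂
            * fromBlocks (N₁₁ k) (N₁₂ k) (N₂₁ k) (N₂₂ k)
      = -((fromCols C₁ C₂)ᵀ * fromCols C₁ C₂)) :
    (A₁₁ - A₁₂ * E)ᵀ * Θ₁ + Θ₁ * (A₁₁ - A₁₂ * E)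
        + c • ∑ k, (N₁₁ k - N₁₂ k * E)ᵀ * Θ₁ * (N₁₁ k - N₁₂ k * E)
      = -((C₁ - C₂ * E)ᵀ * (C₁ - C₂ * E))
        - c • ∑ k, (N₂₁ k - N₂₂ k * E)ᵀ * Θ₂ * (N₂₁ k - N₂₂ k * E) := by
  have := generalizedLyapunov_congr h (fromRows (1 : Matrix m m R) (-E))
  simp only [fromBlocks_mul_fromRows_one_neg, fromCols_mul_fromRows_one_neg, hE, sub_self,
    transpose_fromRows_mul_fromBlocks_zero_mul_fromRows, transpose_one, transpose_neg,
    transpose_zero, Matrix.mul_one, Matrix.one_mul, Matrix.mul_zero, Matrix.zero_mul,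
    add_zero, Finset.sum_add_distrib, smul_add] at this
  rw [eq_sub_iff_add_eq, ← this]
  abel

end Reduction

theorem spa_observability_equation
    {r s p m : ℕ} (γ : ℝ)
    (A11 : Matrix (Fin r) (Fin r) ℝ) (A12 : Matrix (Fin r) (Fin s) ℝ)
    (A21 : Matrix (Fin s) (Fin r) ℝ) (A22 : Matrix (Fin s) (Fin s) ℝ)
    (N11 : Fin m → Matrix (Fin r) (Fin r) ℝ) (N12 : Fin m → Matrix (Fin r) (Fin s) ℝ)
    (N21 : Fin m → Matrix (Fin s) (Fin r) ℝ) (N22 : Fin m → Matrix (Fin s) (Fin s) ℝ)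
    (C1 : Matrix (Fin p) (Fin r) ℝ) (C2 : Matrix (Fin p) (Fin s) ℝ)
    (Θ1 : Matrix (Fin r) (Fin r) ℝ) (Θ2 : Matrix (Fin s) (Fin s) ℝ)
    (hΘ2 : Θ2.PosSemidef)
    (hA22inv : IsUnit A22)
    (heq : (Matrix.fromBlocks A11 A12 A21 A22)ᵀ * Matrix.fromBlocks Θ1 0 0 Θ2
        + Matrix.fromBlocks Θ1 0 0 Θ2 * Matrix.fromBlocks A11 A12 A21 A22
        + (γ ^ 2)⁻¹ • ∑ k,
            (Matrix.fromBlocks (N11 k) (N12 k) (N21 k) (N22 k))ᵀ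
              * Matrix.fromBlocks Θ1 0 0 Θ2
              * Matrix.fromBlocks (N11 k) (N12 k) (N21 k) (N22 k)
      = -((Matrix.fromCols C1 C2)ᵀ * Matrix.fromCols C1 C2)) :
    ((A11 - A12 * A22⁻¹ * A21)ᵀ * Θ1 + Θ1 * (A11 - A12 * A22⁻¹ * A21)
        + (γ ^ 2)⁻¹ • ∑ k,
            (N11 k - N12 k * A22⁻¹ * A21)ᵀ * Θ1 * (N11 k - N12 k * A22⁻¹ * A21)
      = -((C1 - C2 * A22⁻¹ * A21)ᵀ * (C1 - C2 * A22⁻¹ * A21))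
        - (γ ^ 2)⁻¹ • ∑ k,
            (N21 k - N22 k * A22⁻¹ * A21)ᵀ * Θ2 * (N21 k - N22 k * A22⁻¹ * A21))
    ∧ (-((C1 - C2 * A22⁻¹ * A21)ᵀ * (C1 - C2 * A22⁻¹ * A21))
        - ((A11 - A12 * A22⁻¹ * A21)ᵀ * Θ1 + Θ1 * (A11 - A12 * A22⁻¹ * A21)
          + (γ ^ 2)⁻¹ • ∑ k,
              (N11 k - N12 k * A22⁻¹ * A21)ᵀ * Θ1
                * (N11 k - N12 k * A22⁻¹ * A21))).PosSemidef := by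
  have hE : A22 * (A22⁻¹ * A21) = A21 := by
    rw [← Matrix.mul_assoc, mul_nonsing_inv _ ((isUnit_iff_isUnit_det _).mp hA22inv),
      Matrix.one_mul]
  have hred := reduced_generalizedLyapunov_eq A11 A12 A21 A22 N11 N12 N21 N22 C1 C2 Θ1 Θ2 _ hE heq
  simp only [← Matrix.mul_assoc] at hred
  refine ⟨hred, ?_⟩
  rw [hred, sub_sub_cancel]
  refine (posSemidef_sum _ fun k _ => ?_).smul (by positivity)
  simpa only [conjTranspose_eq_transpose_of_trivial] using
    hΘ2.conjTranspose_mul_mul_same (N21 k - N22 k * A22⁻¹ * A21)
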